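/- arXiv:1510.03235 — 4 statements merged into one kernel-verified Lean document; each statement's English description precedes it below -/
import Mathlib

section
/- If |w| < 14·sqrt(3) and k is a nonzero real number, then the complex numbers λ = -6 ± (1/21)·sqrt(36ikw - 12k^2 - 414w^2) have strictly negative real part. -/
lemma re_cpow_half_nonneg (z : ℂ) : 0 ≤ (z ^ ((1 : ℂ) / 2)).re := by
  rcases eq_or_ne z 0 with rfl | hz
  · rw [Complex.zero_cpow (by norm_num)]; simp
  · rw [Complex.cpow_def_of_ne_zero hz, Complex.exp_re]
    apply mul_nonneg (Real.exp_pos _).le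
    apply Real.cos_nonneg_of_mem_Icc
    have h1 := Complex.arg_le_pi z
    have h2 := Complex.neg_pi_lt_arg z
    constructor <;>
      · simp only [Complex.mul_im, Complex.log_im, Complex.log_re, Complex.div_re,
          Complex.div_im, Complex.one_re, Complex.one_im, Set.mem_Icc]
        norm_num
        linarith

/-- If `|w| < 14√3` and `k ≠ 0`, then both `λ = -6 ± (1/21)·√(36ikw - 12k² - 414w²)`
have strictly negative real part. -/
theorem eigen_re_neg (k w : ℝ) (hw : |w| < 14 * Real.sqrt 3) (hk : k ≠ 0) :
    (((-6 : ℂ) + (1 / 21) *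
        ((36 * Complex.I * k * w - 12 * k ^ 2 - 414 * w ^ 2) ^ ((1 : ℂ) / 2))).re < 0) ∧
    (((-6 : ℂ) - (1 / 21) *
        ((36 * Complex.I * k * w - 12 * k ^ 2 - 414 * w ^ 2) ^ ((1 : ℂ) / 2))).re < 0) := by
  set z : ℂ := 36 * Complex.I * k * w - 12 * k ^ 2 - 414 * w ^ 2 with hzdef
  set s : ℂ := z ^ ((1 : ℂ) / 2) with hsdef
  have hk2 : 0 < k ^ 2 := by positivity
  have hw2 : w ^ 2 < 588 := by
    have h3 : Real.sqrt 3 ^ 2 = 3 := Real.sq_sqrt (by norm_num)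
    have h0 : (0:ℝ) ≤ 14 * Real.sqrt 3 := by positivity
    nlinarith [abs_nonneg w, sq_abs w]
  have hzre : z.re = -(12 * k ^ 2 + 414 * w ^ 2) := by
    simp [hzdef, ← Complex.ofReal_pow]; ring
  have hzim : z.im = 36 * k * w := by
    simp [hzdef, ← Complex.ofReal_pow]
  have ha : 0 < 12 * k ^ 2 + 414 * w ^ 2 := by positivity
  have hzne : z ≠ 0 := by
    intro h
    rw [h] at hzre
    simp at hzre
    nlinarith
  have hs2 : s ^ 2 = z := by
    rw [hsdef, one_div]
    exact Complex.cpow_ofNat_inv_pow z 2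
  have hre : s.re ^ 2 - s.im ^ 2 = z.re := by
    rw [← hs2]; simp only [sq, Complex.mul_re]
  have hsre0 : 0 ≤ s.re := re_cpow_half_nonneg z
  set N := Complex.normSq s with hNdef
  have hNval : N = s.re ^ 2 + s.im ^ 2 := by
    rw [hNdef, Complex.normSq_apply]; ring
  have hN2 : N ^ 2 = z.re ^ 2 + z.im ^ 2 := by
    have : Complex.normSq (s ^ 2) = Complex.normSq z := by rw [hs2]
    rw [map_pow] at this
    rw [hNdef, this, Complex.normSq_apply]; ring
  have hNpos : 0 ≤ N := Complex.normSq_nonneg s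
  have hb : (36 * k * w) ^ 2 < 63504 * (12 * k ^ 2 + 414 * w ^ 2) := by
    nlinarith [mul_pos hk2 (by linarith : (0:ℝ) < 588 - w ^ 2)]
  have hN_lt : N < 12 * k ^ 2 + 414 * w ^ 2 + 31752 := by
    rw [hzre, hzim] at hN2
    nlinarith [hN2, hb, hNpos, ha]
  have h2re : 2 * s.re ^ 2 < 31752 := by
    have : 2 * s.re ^ 2 = N + z.re := by rw [hNval]; linarith
    rw [this, hzre]; linarith
  have key : s.re < 126 := by nlinarith [hsre0]
  have hcast : ((1:ℂ)/21) = ((1/21 : ℝ) : ℂ) := by norm_num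
  constructor
  · simp only [Complex.add_re, Complex.neg_re, hcast, Complex.re_ofReal_mul]
    norm_num; linarith
  · simp only [Complex.sub_re, Complex.neg_re, hcast, Complex.re_ofReal_mul]
    norm_num; linarith
end

section
/- For real numbers w_x, w_y and κ = 42², the 6×6 matrix L with rows (-6, 0, 0, -6w_x/7, -2w_y/7, 0), (0, -6, 0, -2w_x/7, -6w_y/7, 0), (0, 0, -6, 8w_x/7, 8w_y/7, 0), (w_x, 2w_x/7, 0, -6, 0, 5w_y/7), (2w_y/7, w_y, 0, 0, -6, 5w_x/7), (0, 0, 0, -2w_y/7, -2w_x/7, -6) has all complex eigenvalues with real part equal to -6. -/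
open Matrix

/-- The 6×6 matrix `L` from the quasidynamic approximation. -/
noncomputable def Lmat (wx wy : ℝ) : Matrix (Fin 6) (Fin 6) ℝ :=
  !![-6, 0, 0, -6 * wx / 7, -2 * wy / 7, 0;
     0, -6, 0, -2 * wx / 7, -6 * wy / 7, 0;
     0, 0, -6, 8 * wx / 7, 8 * wy / 7, 0;
     wx, 2 * wx / 7, 0, -6, 0, 5 * wy / 7;
     2 * wy / 7, wy, 0, 0, -6, 5 * wx / 7;
     0, 0, 0, -2 * wy / 7, -2 * wx / 7, -6]

/-! With `r = wx² + wy²`, the characteristic polynomial of `L` is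
`(X + 6)² ((X + 6)² + 46r/49) ((X + 6)² + 10r/49)`, so every eigenvalue `μ` has `(μ + 6)²` real and
nonpositive, which puts `μ + 6` on the imaginary axis. -/

open scoped ComplexOrder

theorem eval_charpoly_map_Lmat (wx wy : ℝ) (z : ℂ) :
    ((Lmat wx wy).map Complex.ofReal).charpoly.eval z =
      (z + 6) ^ 2 * ((z + 6) ^ 2 + ((46 * (wx ^ 2 + wy ^ 2) / 49 : ℝ) : ℂ)) *
        ((z + 6) ^ 2 + ((10 * (wx ^ 2 + wy ^ 2) / 49 : ℝ) : ℂ)) := by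
  rw [eval_charpoly, ← etaExpand_eq (scalar _ z - _)]
  -- expand into a `!![...]` literal, so that `eval_det` applies
  simp only [etaExpand, FinVec.etaExpand, FinVec.map, FinVec.seq, Function.comp_def, vecTail]
  simp only [Lmat, Matrix.sub_apply, scalar_apply, diagonal_apply, map_apply, of_apply, cons_val,
    cons_val_zero, cons_val_one, Fin.succ_zero_eq_one, Fin.succ_one_eq_two, Fin.reduceSucc,
    Fin.reduceEq, if_true, if_false, id, Complex.ofReal_zero, sub_self]
  eval_det
  push_cast
  ring

/-- All complex eigenvalues of `L` have real part `-6`. -/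
theorem Lmat_eigenvalues_re (wx wy : ℝ) (μ : ℂ)
    (hμ : ((Lmat wx wy).map (Complex.ofReal)).charpoly.IsRoot μ) :
    μ.re = -6 := by
  rw [Polynomial.IsRoot.def, eval_charpoly_map_Lmat] at hμ
  have sq_nonpos_of_add_eq_zero {c : ℝ} (hc : 0 ≤ c) (h : (μ + 6) ^ 2 + c = 0) :
      (μ + 6) ^ 2 ≤ 0 := by
    rw [eq_neg_of_add_eq_zero_left h, neg_nonpos]
    exact Complex.zero_le_real.2 hc
  have hsq : (μ + 6) ^ 2 ≤ 0 := by
    obtain (h | h) | h := by simpa only [mul_eq_zero] using hμ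
    · exact h.le
    · exact sq_nonpos_of_add_eq_zero (by positivity) h
    · exact sq_nonpos_of_add_eq_zero (by positivity) h
  have hre : (μ + 6).re = 0 := Complex.sq_nonpos_iff.1 hsq
  rw [Complex.add_re, Complex.re_ofNat] at hre
  linarith
end

section
/- For κ = 42² and real w_x, w_y, ρ, ρ_x, ρ_y, the solution (S₁₃, S₂₃) of the linear system (κ + 10(w_x²+w_y²) + 36w_x²)S₁₃ + 36w_x w_y S₂₃ = (κ/30)(w_x ρ + ρ_x/3), 36w_x w_y S₁₃ + (κ + 10(w_x²+w_y²) + 36w_y²)S₂₃ = (κ/30)(w_y ρ + ρ_y/3) is given by (S₁₃, S₂₃) = D(∇w) · (κ/30)·(w_x ρ + ρ_x/3, w_y ρ + ρ_y/3), where D(∇w) = (1/(κ+10|∇w|²))[I - (36/(κ+46|∇w|²))∇w⊗∇w] and ∇w = (w_x, w_y). -/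
open Matrix

/-- The diffusion matrix `D(∇w) = (1/(κ + 10|∇w|²))·[I - (36/(κ + 46|∇w|²))·∇w⊗∇w]`, `κ = 42²`. -/
noncomputable def Dmat (g : Fin 2 → ℝ) : Matrix (Fin 2) (Fin 2) ℝ :=
  ((42 ^ 2 + 10 * (g 0 ^ 2 + g 1 ^ 2) : ℝ)⁻¹) •
    ((1 : Matrix (Fin 2) (Fin 2) ℝ) -
      ((36 / (42 ^ 2 + 46 * (g 0 ^ 2 + g 1 ^ 2)) : ℝ)) • vecMulVec g g)

/-! The system reads `(a • 1 + 36 • ∇w⊗∇w) S = b` with `a = κ + 10|∇w|²`, and `D(∇w)` is the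
Sherman–Morrison inverse of that rank-one perturbation of a scalar matrix. -/

section ShermanMorrison

variable {n K : Type*} [Fintype n] [Field K]

theorem vecMulVec_self_mul_self (g : n → K) :
    vecMulVec g g * vecMulVec g g = (g ⬝ᵥ g) • vecMulVec g g := by
  rw [vecMulVec_mul_vecMulVec, vecMulVec_smul]

variable [DecidableEq n]

theorem inv_smul_one_sub_smul_vecMulVec_mul {a c : K} (g : n → K) (ha : a ≠ 0)
    (hb : a + c * (g ⬝ᵥ g) ≠ 0) :
    (a⁻¹ • (1 - (c / (a + c * (g ⬝ᵥ g))) • vecMulVec g g)) * (a • 1 + c • vecMulVec g g) = 1 := by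
  simp only [smul_mul_assoc, mul_smul_comm, sub_mul, mul_add, one_mul, mul_one,
    vecMulVec_self_mul_self]
  match_scalars
  · field_simp
  · field_simp
    ring

theorem eq_mulVec_of_smul_one_add_smul_vecMulVec_mulVec_eq {a c : K} {g S b : n → K}
    (ha : a ≠ 0) (hb : a + c * (g ⬝ᵥ g) ≠ 0) (hS : (a • 1 + c • vecMulVec g g) *ᵥ S = b) :
    S = (a⁻¹ • (1 - (c / (a + c * (g ⬝ᵥ g))) • vecMulVec g g)) *ᵥ b := by
  rw [← hS, mulVec_mulVec, inv_smul_one_sub_smul_vecMulVec_mul g ha hb, one_mulVec]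

end ShermanMorrison

/-- For `κ = 42²`, any solution `(S₁₃, S₂₃)` of the algebraic local-equilibrium system for
rectilinear flow is given by `(S₁₃, S₂₃) = D(∇w)·(κ/30)·(wₓρ + ρₓ/3, w_yρ + ρ_y/3)`. -/
theorem rectilinear_equilibrium_S (wx wy ρ ρx ρy S13 S23 : ℝ)
    (h1 : (42 ^ 2 + 10 * (wx ^ 2 + wy ^ 2) + 36 * wx ^ 2) * S13 + 36 * wx * wy * S23 =
      42 ^ 2 / 30 * (wx * ρ + ρx / 3))
    (h2 : 36 * wx * wy * S13 + (42 ^ 2 + 10 * (wx ^ 2 + wy ^ 2) + 36 * wy ^ 2) * S23 =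
      42 ^ 2 / 30 * (wy * ρ + ρy / 3)) :
    ![S13, S23] = (Dmat ![wx, wy]).mulVec
      ((42 ^ 2 / 30 : ℝ) • ![wx * ρ + ρx / 3, wy * ρ + ρy / 3]) := by
  set g : Fin 2 → ℝ := ![wx, wy]
  set a : ℝ := 42 ^ 2 + 10 * (wx ^ 2 + wy ^ 2)
  have hgg : g ⬝ᵥ g = wx ^ 2 + wy ^ 2 := by simp [g, dotProduct, sq]
  have hsys : (a • 1 + (36 : ℝ) • vecMulVec g g) *ᵥ ![S13, S23] =
      (42 ^ 2 / 30 : ℝ) • ![wx * ρ + ρx / 3, wy * ρ + ρy / 3] := by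
    ext i
    fin_cases i <;>
      simp only [mulVec, dotProduct, Fin.sum_univ_two, Matrix.add_apply, Matrix.smul_apply,
        vecMulVec_apply, one_apply_eq, one_apply_ne, ne_eq, zero_ne_one, one_ne_zero,
        not_false_eq_true, Pi.smul_apply, smul_eq_mul, g, a, Fin.zero_eta, Fin.mk_one,
        cons_val_zero, cons_val_one, cons_val_fin_one]
    · linear_combination h1
    · linear_combination h2
  have hD : Dmat g = a⁻¹ • (1 - (36 / (a + 36 * (g ⬝ᵥ g))) • vecMulVec g g) := by
    rw [hgg, show a + 36 * (wx ^ 2 + wy ^ 2) = 42 ^ 2 + 46 * (wx ^ 2 + wy ^ 2) by ring]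
    rfl
  rw [hD]
  exact eq_mulVec_of_smul_one_add_smul_vecMulVec_mulVec_eq (by positivity)
    (by rw [hgg]; positivity) hsys
end

section
/- The Laplacian Δ : P_k(ℝ^d) → P_{k-2}(ℝ^d) is surjective for all d ≥ 1 and k ≥ 2. -/
/-!
The monomials of degree `m` span `P_m`, so it suffices to hit each `x^α` with `|α| = m`. Fix a
variable `x₀`. Then `Δ (x^α x₀²) = (α₀ + 2)(α₀ + 1) x^α + (terms x^γ with |γ| = m and γ₀ = α₀ + 2)`,
so `x^α` lies in `Δ P_{m+2}` as soon as every degree-`m` monomial with a larger exponent of `x₀`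
does. Induction on `m - α₀` (the room left for the exponent of `x₀` to grow) concludes.
-/

open MvPolynomial Finsupp

noncomputable def polyLap {d : ℕ} (P : MvPolynomial (Fin d) ℝ) : MvPolynomial (Fin d) ℝ :=
  ∑ i : Fin d, pderiv i (pderiv i P)

namespace MvPolynomial

noncomputable def laplacian (σ R : Type*) [Fintype σ] [CommSemiring R] :
    MvPolynomial σ R →ₗ[R] MvPolynomial σ R :=
  ∑ i, (pderiv i).toLinearMap ∘ₗ (pderiv i).toLinearMap

theorem laplacian_apply {σ R : Type*} [Fintype σ] [CommSemiring R] (p : MvPolynomial σ R) :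
    laplacian σ R p = ∑ i, pderiv i (pderiv i p) := by
  simp [laplacian]

theorem pderiv_pderiv_monomial {σ R : Type*} [CommSemiring R] (i : σ) (s : σ →₀ ℕ) (a : R) :
    pderiv i (pderiv i (monomial s a)) =
      monomial (s - single i 2) (a * (s i * (s i - 1) : ℕ)) := by
  rw [pderiv_monomial, pderiv_monomial, tsub_tsub, ← single_add, tsub_apply, single_eq_same,
    Nat.cast_mul, mul_assoc]

variable {σ K : Type*} [Fintype σ] [Field K] [CharZero K]

theorem monomial_one_mem_map_laplacian (i₀ : σ) {m : ℕ} (α : σ →₀ ℕ) (hα : α.degree = m) :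
    monomial α (1 : K) ∈ (homogeneousSubmodule σ K (m + 2)).map (laplacian σ K) := by
  induction hn : m - α i₀ using Nat.strong_induction_on generalizing α with
  | _ n ih =>
  classical
  set M := (homogeneousSubmodule σ K (m + 2)).map (laplacian σ K)
  have monomial_mem : ∀ γ : σ →₀ ℕ, γ.degree = m → α i₀ < γ i₀ → ∀ c : K, monomial γ c ∈ M := by
    intro γ hγ hlt c
    rw [← mul_one c, ← smul_eq_mul, ← smul_monomial]
    exact M.smul_mem c (ih _ (by have := le_degree i₀ γ; omega) γ hγ rfl)
  set β := α + single i₀ 2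
  have hβ : β.degree = m + 2 := by simp [β, hα]
  have hΔβ : laplacian σ K (monomial β 1) ∈ M :=
    Submodule.mem_map_of_mem (isHomogeneous_monomial _ hβ)
  have hrest : ∑ i ∈ Finset.univ.erase i₀, pderiv i (pderiv i (monomial β (1 : K))) ∈ M := by
    refine M.sum_mem fun i hi => ?_
    have hi₀ : i₀ ≠ i := (Finset.ne_of_mem_erase hi).symm
    rw [pderiv_pderiv_monomial]
    by_cases h2 : 2 ≤ β i
    · have hle : single i 2 ≤ β := single_le_iff.mpr h2
      have hdeg := congrArg degree (tsub_add_cancel_of_le hle)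
      rw [map_add, degree_single, hβ] at hdeg
      refine monomial_mem _ (by omega) ?_ _
      simp [β, single_eq_of_ne hi₀]
    · obtain h | h : β i = 0 ∨ β i = 1 := by omega
      all_goals simp [h]
  have hc : (((α i₀ + 2) * (α i₀ + 1) : ℕ) : K) ≠ 0 := Nat.cast_ne_zero.mpr (by positivity)
  have hsplit : laplacian σ K (monomial β 1) =
      monomial α (((α i₀ + 2) * (α i₀ + 1) : ℕ) : K) +
        ∑ i ∈ Finset.univ.erase i₀, pderiv i (pderiv i (monomial β (1 : K))) := by
    rw [laplacian_apply, ← Finset.add_sum_erase _ _ (Finset.mem_univ i₀), pderiv_pderiv_monomial,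
      add_tsub_cancel_right]
    simp [β]
  have hαc : monomial α (((α i₀ + 2) * (α i₀ + 1) : ℕ) : K) ∈ M := by
    rw [eq_sub_of_add_eq hsplit.symm]
    exact M.sub_mem hΔβ hrest
  rw [← inv_mul_cancel₀ hc, ← smul_eq_mul, ← smul_monomial]
  exact M.smul_mem _ hαc

theorem homogeneousSubmodule_le_map_laplacian [Nonempty σ] (m : ℕ) :
    homogeneousSubmodule σ K m ≤ (homogeneousSubmodule σ K (m + 2)).map (laplacian σ K) := by
  rw [homogeneousSubmodule_eq_finsupp_supported, AddMonoidAlgebra.supported_eq_span_single,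
    Submodule.span_le]
  rintro _ ⟨α, hα, rfl⟩
  exact monomial_one_mem_map_laplacian (Classical.arbitrary σ) α hα

end MvPolynomial

/-- The Laplacian `Δ : P_k(ℝ^d) → P_{k-2}(ℝ^d)` is surjective for all `d ≥ 1` and `k ≥ 2`. -/
theorem polyLap_surjective {d k : ℕ} (hd : 1 ≤ d) (hk : 2 ≤ k)
    (Q : MvPolynomial (Fin d) ℝ) (hQ : Q ∈ homogeneousSubmodule (Fin d) ℝ (k - 2)) :
    ∃ P ∈ homogeneousSubmodule (Fin d) ℝ k, polyLap P = Q := by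
  obtain ⟨m, rfl⟩ : ∃ m, k = m + 2 := ⟨k - 2, by omega⟩
  have : Nonempty (Fin d) := ⟨⟨0, hd⟩⟩
  rw [Nat.add_sub_cancel] at hQ
  obtain ⟨P, hP, rfl⟩ := homogeneousSubmodule_le_map_laplacian m hQ
  exact ⟨P, hP, (laplacian_apply P).symm⟩
end
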